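/- arXiv:2311.17312 — 3 statements merged into one kernel-verified Lean document; each statement's English description precedes it below -/
import Mathlib

section
/- Let a = (a_1, …, a_m) be a strictly decreasing partition with m ≥ 2 and a_m = 1, let ε ∈ {0,1}^m with ε_m = 1, and let k ≥ 1. Then g(a, ε, k) = g(a', ε', k−1), where a' = (a_1 − 1, a_2 − 1, …, a_{m−1} − 1) and ε' = (ε_1, …, ε_{m−1}); moreover g(a, ε, 0) = 0. -/
namespace ChordExpansion

/-- The set of crossings of a chord diagram `E`, where a chord is an ordered pair `(u, v)`
with `u < v`, and a crossing is recorded as `((a, c), (b, d))` with `a < b < c < d`. -/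
def crossings (E : Finset (ℕ × ℕ)) : Finset ((ℕ × ℕ) × (ℕ × ℕ)) :=
  (E ×ˢ E).filter fun p => p.1.1 < p.2.1 ∧ p.2.1 < p.1.2 ∧ p.1.2 < p.2.2

/-- Encoding of a crossing as a natural number (used to pick a canonical crossing). -/
def encodeC (p : (ℕ × ℕ) × (ℕ × ℕ)) : ℕ :=
  Nat.pair (Nat.pair p.1.1 p.1.2) (Nat.pair p.2.1 p.2.2)

def decodeC (x : ℕ) : (ℕ × ℕ) × (ℕ × ℕ) :=
  ((x.unpair.1.unpair.1, x.unpair.1.unpair.2), (x.unpair.2.unpair.1, x.unpair.2.unpair.2))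

/-- The canonical (least, in a fixed encoding) crossing of `E`. -/
def canonCrossing (E : Finset (ℕ × ℕ)) : (ℕ × ℕ) × (ℕ × ℕ) :=
  decodeC (WithTop.untopD 0 ((crossings E).image encodeC).min)

/-- First result `E₁ = (E ∖ {ac, bd}) ∪ {ab, cd}` of expanding `E` at its canonical crossing. -/
def expand1 (E : Finset (ℕ × ℕ)) : Finset (ℕ × ℕ) :=
  (E \ {(canonCrossing E).1, (canonCrossing E).2}) ∪
    {((canonCrossing E).1.1, (canonCrossing E).2.1),
     ((canonCrossing E).1.2, (canonCrossing E).2.2)}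

/-- Second result `E₂ = (E ∖ {ac, bd}) ∪ {ad, bc}` of expanding `E` at its canonical crossing. -/
def expand2 (E : Finset (ℕ × ℕ)) : Finset (ℕ × ℕ) :=
  (E \ {(canonCrossing E).1, (canonCrossing E).2}) ∪
    {((canonCrossing E).1.1, (canonCrossing E).2.2),
     ((canonCrossing E).2.1, (canonCrossing E).1.2)}

/-- Fuel-based chord expansion number; since each expansion strictly decreases the number of
crossings, fuel `(crossings E).card` suffices. -/
def exAux : ℕ → Finset (ℕ × ℕ) → ℕ
  | 0, _ => 1
  | fuel + 1, E =>
    if crossings E = ∅ then 1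
    else exAux fuel (expand1 E) + exAux fuel (expand2 E)

/-- The chord expansion number `ex(E)`. -/
def exCD (E : Finset (ℕ × ℕ)) : ℕ := exAux (crossings E).card E

/-- Fuel-based chord expansion multiset. -/
def ncdAux : ℕ → Finset (ℕ × ℕ) → Multiset (Finset (ℕ × ℕ))
  | 0, E => {E}
  | fuel + 1, E =>
    if crossings E = ∅ then {E}
    else ncdAux fuel (expand1 E) + ncdAux fuel (expand2 E)

/-- The chord expansion multiset `𝒩𝒞𝒟(E)` of nonintersecting chord diagrams obtained by
iterated chord expansions. -/
def ncd (E : Finset (ℕ × ℕ)) : Multiset (Finset (ℕ × ℕ)) := ncdAux (crossings E).card E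

/-- The chord diagram `E(a, ε)`: rows indexed by `1..m`, with `n = a 1` columns.  The points
`x_1, …, x_m, z_1, …, z_n, y_n, …, y_1` in anticlockwise circular order are labelled
`x_i = i`, `z_j = m + j`, `y_j = m + 2n + 1 - j`. -/
def EDiag (m n : ℕ) (a ε : ℕ → ℕ) : Finset (ℕ × ℕ) :=
  ((Finset.Icc 1 m).filter fun i => ε i = 0).image (fun i => (i, m + 2 * n + 1 - a i)) ∪
  ((Finset.Icc 1 m).filter fun i => ε i = 1).image (fun i => (i, m + a i)) ∪
  ((Finset.Icc 1 n).filter fun j => j ∉ (Finset.Icc 1 m).image a).image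
    (fun j => (m + j, m + 2 * n + 1 - j))

/-- `e_F(U)`: the number of chords of `F` with both endpoints in `U`. -/
def eCh (F : Finset (ℕ × ℕ)) (U : Finset ℕ) : ℕ :=
  (F.filter fun c => c.1 ∈ U ∧ c.2 ∈ U).card

/-- `f(a, ε, k)`: the number of nonintersecting chord diagrams `F` in the chord expansion
multiset of `E(a, ε)` with `e_F(Y) + e_F(X ∪ Z) = k`, where `X ∪ Z` is labelled
`1..m+n` and `Y` is labelled `m+n+1..m+2n` (`n = a 1`). -/
def fCD (m : ℕ) (a ε : ℕ → ℕ) (k : ℕ) : ℕ :=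
  Multiset.countP
    (fun F =>
      eCh F (Finset.Icc (m + a 1 + 1) (m + 2 * a 1)) + eCh F (Finset.Icc 1 (m + a 1)) = k)
    (ncd (EDiag m (a 1) a ε))

/-- The boxes `(i, j)`, `1 ≤ i ≤ m`, `1 ≤ j ≤ a i`, of the Young diagram of shape `a`. -/
def boxes (m : ℕ) (a : ℕ → ℕ) : Finset (ℕ × ℕ) :=
  ((Finset.Icc 1 m) ×ˢ (Finset.Icc 1 (a 1))).filter fun p => p.2 ≤ a p.1

/-- `g(a, ε, k)`: the number of 0-1 Young diagrams of shape `a` (identified with the set `M`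
of boxes carrying a `1`) such that every column has at most one `1`, row `i` has a number of
`1`'s congruent to `ε i (mod 2)`, and there are exactly `k` `1`'s in total. -/
def gYD (m : ℕ) (a ε : ℕ → ℕ) (k : ℕ) : ℕ :=
  ((boxes m a).powerset.filter fun M =>
    (∀ j ∈ Finset.Icc 1 (a 1), (M.filter fun p => p.2 = j).card ≤ 1) ∧
    (∀ i ∈ Finset.Icc 1 m, (M.filter fun p => p.1 = i).card % 2 = ε i % 2) ∧
    M.card = k).card

/-- As `gYD`, but with no condition on the total number of `1`'s. -/
def gAll (m : ℕ) (a ε : ℕ → ℕ) : ℕ :=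
  ((boxes m a).powerset.filter fun M =>
    (∀ j ∈ Finset.Icc 1 (a 1), (M.filter fun p => p.2 = j).card ≤ 1) ∧
    (∀ i ∈ Finset.Icc 1 m, (M.filter fun p => p.1 = i).card % 2 = ε i % 2)).card


/-! Row `m` of the shape is the single box `(m, 1)`, and its parity condition forces a `1` there.
The column condition then leaves no other `1` in column `1`, so deleting the first column and the
last row maps the admissible diagrams of shape `a` with `k` ones bijectively onto those of shape
`a'` with `k - 1` ones; the inverse shifts a diagram one column to the right and puts a `1` at
`(m, 1)`. -/

open Finset

def succCol : ℕ × ℕ ↪ ℕ × ℕ :=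
  ⟨fun p => (p.1, p.2 + 1), fun p q h => by
    simp only [Prod.mk.injEq, add_left_inj] at h
    exact Prod.ext h.1 h.2⟩

@[simp] lemma succCol_apply (p : ℕ × ℕ) : succCol p = (p.1, p.2 + 1) := rfl

abbrev ColumnsAtMostOne (n : ℕ) (M : Finset (ℕ × ℕ)) : Prop :=
  ∀ j ∈ Icc 1 n, (M.filter fun p => p.2 = j).card ≤ 1

abbrev RowParity (m : ℕ) (ε : ℕ → ℕ) (M : Finset (ℕ × ℕ)) : Prop :=
  ∀ i ∈ Icc 1 m, (M.filter fun p => p.1 = i).card % 2 = ε i % 2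

lemma gYD_eq (m : ℕ) (a ε : ℕ → ℕ) (k : ℕ) :
    gYD m a ε k = ((boxes m a).powerset.filter fun M =>
      ColumnsAtMostOne (a 1) M ∧ RowParity m ε M ∧ M.card = k).card := rfl

lemma mem_boxes {m : ℕ} {a : ℕ → ℕ} {p : ℕ × ℕ} :
    p ∈ boxes m a ↔ 1 ≤ p.1 ∧ p.1 ≤ m ∧ 1 ≤ p.2 ∧ p.2 ≤ a 1 ∧ p.2 ≤ a p.1 := by
  simp only [boxes, mem_filter, mem_product, mem_Icc, and_assoc]

lemma map_succCol_boxes (m : ℕ) (a : ℕ → ℕ) :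
    (boxes m fun i => a i - 1).map succCol =
      (boxes (m + 1) a).filter fun p => p.1 ≤ m ∧ 2 ≤ p.2 := by
  ext ⟨i, j⟩
  simp only [mem_map, mem_filter, mem_boxes, succCol_apply]
  constructor
  · rintro ⟨⟨i', j'⟩, h, heq⟩
    simp only [Prod.mk.injEq] at heq
    obtain ⟨rfl, rfl⟩ := heq
    dsimp only at h ⊢
    omega
  · intro h
    exact ⟨(i, j - 1), by dsimp only; omega, Prod.ext rfl (by dsimp only; omega)⟩

lemma filter_snd_map_succCol (M : Finset (ℕ × ℕ)) (j : ℕ) :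
    (M.map succCol).filter (fun p => p.2 = j + 1) =
      (M.filter fun p => p.2 = j).map succCol := by
  rw [filter_map]
  congr 1
  exact filter_congr fun p _ => by simp

lemma filter_fst_map_succCol (M : Finset (ℕ × ℕ)) (i : ℕ) :
    (M.map succCol).filter (fun p => p.1 = i) = (M.filter fun p => p.1 = i).map succCol := by
  rw [filter_map]
  rfl

lemma columnsAtMostOne_insert_map_succCol_iff {n c : ℕ} {M : Finset (ℕ × ℕ)}
    (hM : ∀ p ∈ M, 1 ≤ p.2) :
    ColumnsAtMostOne (n + 1) (insert (c, 1) (M.map succCol)) ↔ ColumnsAtMostOne n M := by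
  have hshift : ∀ j, 1 ≤ j →
      ((insert (c, 1) (M.map succCol)).filter fun p => p.2 = j + 1).card =
        (M.filter fun p => p.2 = j).card := by
    intro j hj
    rw [filter_insert, if_neg (by simp only; omega), filter_snd_map_succCol, card_map]
  have hfirst : ((insert (c, 1) (M.map succCol)).filter fun p => p.2 = 0 + 1).card ≤ 1 := by
    rw [filter_insert, if_pos rfl, filter_snd_map_succCol,
      filter_eq_empty_iff.2 fun p hp => by have := hM p hp; omega, map_empty, insert_empty,
      card_singleton]
  constructor
  · intro h j hj
    rw [← hshift j (mem_Icc.1 hj).1]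
    exact h (j + 1) (by simp only [mem_Icc] at hj ⊢; omega)
  · intro h j hj
    obtain ⟨hj1, hjn⟩ := mem_Icc.1 hj
    obtain ⟨j, rfl⟩ : ∃ j', j = j' + 1 := ⟨j - 1, by omega⟩
    rcases Nat.eq_zero_or_pos j with rfl | hj0
    · exact hfirst
    · rw [hshift j hj0]
      exact h j (mem_Icc.2 ⟨hj0, by omega⟩)

lemma rowParity_insert_map_succCol_iff {m : ℕ} {ε : ℕ → ℕ} {M : Finset (ℕ × ℕ)}
    (hε : ε (m + 1) % 2 = 1) (hM : ∀ p ∈ M, p.1 ≤ m) :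
    RowParity (m + 1) ε (insert (m + 1, 1) (M.map succCol)) ↔ RowParity m ε M := by
  have hrow : ∀ i ≤ m, ((insert (m + 1, 1) (M.map succCol)).filter fun p => p.1 = i).card =
      (M.filter fun p => p.1 = i).card := by
    intro i hi
    rw [filter_insert, if_neg (by simp only; omega), filter_fst_map_succCol, card_map]
  have hlast : ((insert (m + 1, 1) (M.map succCol)).filter fun p => p.1 = m + 1).card = 1 := by
    rw [filter_insert, if_pos rfl, filter_fst_map_succCol,
      filter_eq_empty_iff.2 fun p hp => by have := hM p hp; omega, map_empty, insert_empty,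
      card_singleton]
  constructor
  · intro h i hi
    rw [← hrow i (mem_Icc.1 hi).2]
    exact h i (by simp only [mem_Icc] at hi ⊢; omega)
  · intro h i hi
    obtain ⟨hi1, him⟩ := mem_Icc.1 hi
    rcases him.lt_or_eq with hlt | rfl
    · rw [hrow i (by omega)]
      exact h i (mem_Icc.2 ⟨hi1, by omega⟩)
    · rw [hlast, hε]

section LastRowOne

variable {m : ℕ} {a ε : ℕ → ℕ} {M : Finset (ℕ × ℕ)}

lemma corner_mem (ham : a (m + 1) = 1) (hε : ε (m + 1) % 2 = 1) (hsub : M ⊆ boxes (m + 1) a)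
    (hrow : RowParity (m + 1) ε M) : (m + 1, 1) ∈ M := by
  have hodd := hrow (m + 1) (mem_Icc.2 ⟨by omega, le_rfl⟩)
  rw [hε] at hodd
  obtain ⟨⟨i, j⟩, hp⟩ := card_pos.1 (by omega : 0 < (M.filter fun p => p.1 = m + 1).card)
  obtain ⟨hpM, rfl⟩ := mem_filter.1 hp
  have hbox := mem_boxes.1 (hsub hpM)
  dsimp only at hbox
  rw [ham] at hbox
  obtain rfl : j = 1 := by omega
  exact hpM

lemma exists_eq_insert_map_succCol (ham : a (m + 1) = 1) (hε : ε (m + 1) % 2 = 1)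
    (hsub : M ⊆ boxes (m + 1) a) (hcol : ColumnsAtMostOne (a 1) M)
    (hrow : RowParity (m + 1) ε M) :
    ∃ M' ⊆ boxes m (fun i => a i - 1), M = insert (m + 1, 1) (M'.map succCol) := by
  have hc := corner_mem ham hε hsub hrow
  have hrest : M.erase (m + 1, 1) ⊆ (boxes m fun i => a i - 1).map succCol := by
    rw [map_succCol_boxes]
    intro p hp
    obtain ⟨hne, hpM⟩ := mem_erase.1 hp
    have hbox := mem_boxes.1 (hsub hpM)
    refine mem_filter.2 ⟨hsub hpM, ?_, ?_⟩
    · by_contra hlast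
      have hp1 : p.1 = m + 1 := by omega
      rw [hp1, ham] at hbox
      exact hne (Prod.ext hp1 (by omega))
    · by_contra hfirst
      have hp1 : p.2 = 1 := by omega
      exact hne (card_le_one.1 (hcol 1 (mem_Icc.2 ⟨le_rfl, by omega⟩)) p
        (mem_filter.2 ⟨hpM, hp1⟩) (m + 1, 1) (mem_filter.2 ⟨hc, rfl⟩))
  obtain ⟨M', hM', hmap⟩ := subset_map_iff.1 hrest
  exact ⟨M', hM', by rw [← hmap, insert_erase hc]⟩

lemma insert_map_succCol_subset_boxes (ha1 : 1 ≤ a 1) (ham : a (m + 1) = 1)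
    (hM : M ⊆ boxes m fun i => a i - 1) :
    insert (m + 1, 1) (M.map succCol) ⊆ boxes (m + 1) a := by
  refine insert_subset (mem_boxes.2 (by dsimp only; omega)) ?_
  calc M.map succCol ⊆ (boxes m fun i => a i - 1).map succCol := map_subset_map.2 hM
    _ ⊆ boxes (m + 1) a := by rw [map_succCol_boxes]; exact filter_subset _ _

lemma corner_notMem_map_succCol (hM : M ⊆ boxes m fun i => a i - 1) :
    (m + 1, 1) ∉ M.map succCol := fun hc => by
  obtain ⟨p, hp, hpc⟩ := mem_map.1 hc
  have := (mem_boxes.1 (hM hp)).2.2.1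
  simp only [succCol_apply, Prod.mk.injEq] at hpc
  omega

lemma card_insert_map_succCol (hM : M ⊆ boxes m fun i => a i - 1) :
    (insert (m + 1, 1) (M.map succCol)).card = M.card + 1 := by
  rw [card_insert_of_notMem (corner_notMem_map_succCol hM), card_map]

lemma columnsAtMostOne_and_rowParity_insert_map_succCol_iff (ha1 : 1 ≤ a 1)
    (hε : ε (m + 1) % 2 = 1) (hM : M ⊆ boxes m fun i => a i - 1) :
    ColumnsAtMostOne (a 1) (insert (m + 1, 1) (M.map succCol)) ∧
        RowParity (m + 1) ε (insert (m + 1, 1) (M.map succCol)) ↔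
      ColumnsAtMostOne (a 1 - 1) M ∧ RowParity m ε M := by
  obtain ⟨n, hn⟩ : ∃ n, a 1 = n + 1 := ⟨a 1 - 1, by omega⟩
  rw [hn, Nat.add_sub_cancel,
    columnsAtMostOne_insert_map_succCol_iff fun p hp => (mem_boxes.1 (hM hp)).2.2.1,
    rowParity_insert_map_succCol_iff hε fun p hp => (mem_boxes.1 (hM hp)).2.1]

lemma gYD_succ_succ (ha1 : 1 ≤ a 1) (ham : a (m + 1) = 1) (hε : ε (m + 1) % 2 = 1) (k : ℕ) :
    gYD (m + 1) a ε (k + 1) = gYD m (fun i => a i - 1) ε k := by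
  rw [gYD_eq, gYD_eq, eq_comm]
  refine card_nbij (fun M' => insert (m + 1, 1) (M'.map succCol)) ?_ ?_ ?_
  · intro M' hM'
    simp only [mem_coe, mem_filter, mem_powerset] at hM' ⊢
    obtain ⟨hsub, hcol, hrow, rfl⟩ := hM'
    have hadm :=
      (columnsAtMostOne_and_rowParity_insert_map_succCol_iff ha1 hε hsub).2 ⟨hcol, hrow⟩
    exact ⟨insert_map_succCol_subset_boxes ha1 ham hsub, hadm.1, hadm.2,
      card_insert_map_succCol hsub⟩
  · intro M₁ hM₁ M₂ hM₂ h
    simp only [mem_coe, mem_filter, mem_powerset] at hM₁ hM₂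
    apply map_injective succCol
    simpa only [erase_insert (corner_notMem_map_succCol hM₁.1),
      erase_insert (corner_notMem_map_succCol hM₂.1)] using
      congrArg (fun s => s.erase (m + 1, 1)) h
  · intro M hM
    simp only [mem_coe, mem_filter, mem_powerset] at hM
    obtain ⟨hsub, hcol, hrow, hk⟩ := hM
    obtain ⟨M', hM', rfl⟩ := exists_eq_insert_map_succCol ham hε hsub hcol hrow
    have hadm :=
      (columnsAtMostOne_and_rowParity_insert_map_succCol_iff ha1 hε hM').1 ⟨hcol, hrow⟩
    rw [card_insert_map_succCol hM'] at hk
    exact ⟨M', by simpa only [mem_coe, mem_filter, mem_powerset] using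
      ⟨hM', hadm.1, hadm.2, Nat.succ_injective hk⟩, rfl⟩

lemma gYD_succ_zero (ham : a (m + 1) = 1) (hε : ε (m + 1) % 2 = 1) : gYD (m + 1) a ε 0 = 0 := by
  rw [gYD_eq, card_eq_zero, filter_eq_empty_iff]
  rintro M hM ⟨-, hrow, hcard⟩
  rw [card_eq_zero] at hcard
  subst hcard
  exact notMem_empty _ (corner_mem ham hε (mem_powerset.1 hM) hrow)

end LastRowOne

theorem g_lastRow_one_general (m : ℕ) (hm : 2 ≤ m) (a ε : ℕ → ℕ)
    (ha : ∀ i, 1 ≤ i → i + 1 ≤ m → a (i + 1) < a i) (ham : a m = 1)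
    (hεm : ε m = 1) (k : ℕ) (hk : 1 ≤ k) :
    gYD m a ε k = gYD (m - 1) (fun i => a i - 1) ε (k - 1) ∧ gYD m a ε 0 = 0 := by
  have ha1 : 1 ≤ a 1 := by have := ha 1 le_rfl hm; omega
  obtain ⟨m, rfl⟩ : ∃ m', m = m' + 1 := ⟨m - 1, by omega⟩
  obtain ⟨k, rfl⟩ : ∃ k', k = k' + 1 := ⟨k - 1, by omega⟩
  have hε : ε (m + 1) % 2 = 1 := by rw [hεm]
  simp only [Nat.add_sub_cancel]
  exact ⟨gYD_succ_succ ha1 ham hε k, gYD_succ_zero ham hε⟩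

/-- **Case 1.2 of the proof of Theorem 1.** If `a m = 1` and `ε m = 1`, then for `k ≥ 1`,
`g(a, ε, k) = g(a', ε', k - 1)` where `a' = (a 1 - 1, …, a (m-1) - 1)` and
`ε' = (ε 1, …, ε (m-1))`; moreover `g(a, ε, 0) = 0`. -/
theorem g_lastRow_one (m : ℕ) (hm : 2 ≤ m) (a ε : ℕ → ℕ)
    (ha : ∀ i, 1 ≤ i → i + 1 ≤ m → a (i + 1) < a i) (ham : a m = 1)
    (hε : ∀ i ∈ Finset.Icc 1 m, ε i = 0 ∨ ε i = 1) (hεm : ε m = 1) (k : ℕ) (hk : 1 ≤ k) :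
    gYD m a ε k = gYD (m - 1) (fun i => a i - 1) ε (k - 1) ∧ gYD m a ε 0 = 0 :=
  g_lastRow_one_general m hm a ε ha ham hεm k hk

end ChordExpansion
end

section
/- Let a = (a_1, …, a_m) be a strictly decreasing partition with a_m ≥ 2, let ε ∈ {0,1}^m, and let k ≥ 0. Then g(a, ε, k) = g(a¹, ε, k) + g(a², ε², k−1), where a¹ = (a_1, …, a_{m−1}, a_m − 1), a² = (a_1 − 1, a_2 − 1, …, a_m − 1), ε² = (ε_1, …, ε_{m−1}, 1 − ε_m), and the second summand is interpreted as 0 when k = 0. -/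
/-!
Split the 0-1 diagrams of shape `a` according to whether the corner box `(m, a m)` carries a `1`.
Those that do not are exactly the diagrams of shape `a¹`. In those that do, column `a m` holds no
other `1`, and since this column meets every row, deleting it leaves a diagram of shape `a²` with
one `1` fewer and the parity of row `m` flipped. Conversely, inserting at position `a m` a new
column whose only `1` lies in row `m` undoes the deletion.
-/

namespace ChordExpansion

open Finset

section Columns

variable {c : ℕ}

def insertCol (c : ℕ) (p : ℕ × ℕ) : ℕ × ℕ := (p.1, if p.2 < c then p.2 else p.2 + 1)

def deleteCol (c : ℕ) (p : ℕ × ℕ) : ℕ × ℕ := (p.1, if p.2 < c then p.2 else p.2 - 1)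

lemma snd_insertCol_ne (p : ℕ × ℕ) : (insertCol c p).2 ≠ c := by
  unfold insertCol
  split_ifs <;> omega

lemma snd_insertCol_inj {p q : ℕ × ℕ} : (insertCol c p).2 = (insertCol c q).2 ↔ p.2 = q.2 := by
  unfold insertCol
  split_ifs <;> omega

lemma deleteCol_insertCol (p : ℕ × ℕ) : deleteCol c (insertCol c p) = p := by
  simp only [insertCol, deleteCol, Prod.ext_iff, true_and]
  split_ifs <;> omega

lemma insertCol_deleteCol {p : ℕ × ℕ} (hp : p.2 ≠ c) : insertCol c (deleteCol c p) = p := by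
  simp only [insertCol, deleteCol, Prod.ext_iff, true_and]
  split_ifs <;> omega

lemma insertCol_injective : Function.Injective (insertCol c) :=
  Function.LeftInverse.injective deleteCol_insertCol

lemma injOn_snd_image_insertCol {N : Finset (ℕ × ℕ)} :
    Set.InjOn Prod.snd (N.image (insertCol c) : Set (ℕ × ℕ)) ↔
      Set.InjOn Prod.snd (N : Set (ℕ × ℕ)) := by
  simp only [coe_image, Set.InjOn, Set.forall_mem_image, snd_insertCol_inj,
    insertCol_injective.eq_iff]

end Columns

section Boxes

variable {m : ℕ} {a : ℕ → ℕ}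

lemma boxes_shortenLastRow (m : ℕ) (a : ℕ → ℕ) :
    boxes m (fun i => if i = m then a m - 1 else a i) = (boxes m a).erase (m, a m) := by
  ext ⟨i, j⟩
  simp only [boxes, mem_erase, mem_filter, mem_product, mem_Icc, ne_eq, Prod.mk.injEq]
  by_cases hi : i = m
  · subst hi
    split_ifs <;> subst_vars <;> omega
  · split_ifs <;> subst_vars <;> omega

lemma insertCol_mem_boxes_iff {c : ℕ} (hc : 1 ≤ c) (hca : ∀ i ∈ Icc 1 m, c ≤ a i)
    {p : ℕ × ℕ} : insertCol c p ∈ boxes m a ↔ p ∈ boxes m (fun i => a i - 1) := by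
  obtain ⟨i, j⟩ := p
  simp only [boxes, insertCol, mem_filter, mem_product, mem_Icc]
  by_cases hi : 1 ≤ i ∧ i ≤ m
  · have hci := hca i (mem_Icc.mpr hi)
    have hc1 := hca 1 (mem_Icc.mpr ⟨le_rfl, by omega⟩)
    split_ifs <;> omega
  · split_ifs <;> omega

lemma forall_card_column_le_one_iff {M : Finset (ℕ × ℕ)} (hM : M ⊆ boxes m a) :
    (∀ j ∈ Icc 1 (a 1), #{p ∈ M | p.2 = j} ≤ 1) ↔ Set.InjOn Prod.snd (M : Set (ℕ × ℕ)) := by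
  constructor
  · intro h p hp q hq hpq
    have hj : p.2 ∈ Icc 1 (a 1) := (mem_product.mp (mem_filter.mp (hM hp)).1).2
    exact card_le_one.mp (h _ hj) p (mem_filter.mpr ⟨hp, rfl⟩) q (mem_filter.mpr ⟨hq, hpq.symm⟩)
  · intro h j _
    refine card_le_one.mpr fun p hp q hq => ?_
    rw [mem_filter] at hp hq
    exact h hp.1 hq.1 (hp.2.trans hq.2.symm)

end Boxes

def IsFilling (m : ℕ) (ε : ℕ → ℕ) (M : Finset (ℕ × ℕ)) : Prop :=
  Set.InjOn Prod.snd (M : Set (ℕ × ℕ)) ∧ ∀ i ∈ Icc 1 m, #{p ∈ M | p.1 = i} % 2 = ε i % 2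

instance (m : ℕ) (ε : ℕ → ℕ) : DecidablePred (IsFilling m ε) :=
  fun _ => inferInstanceAs (Decidable (_ ∧ _))

lemma gYD_eq_card_isFilling (m : ℕ) (a ε : ℕ → ℕ) (k : ℕ) :
    gYD m a ε k = #{M ∈ (boxes m a).powerset | IsFilling m ε M ∧ #M = k} := by
  unfold gYD
  congr 1
  refine filter_congr fun M hM => ?_
  rw [IsFilling, forall_card_column_le_one_iff (mem_powerset.mp hM), and_assoc]

section InsertColWithOne

variable {r c : ℕ}

def insertColWithOne (r c : ℕ) (N : Finset (ℕ × ℕ)) : Finset (ℕ × ℕ) :=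
  insert (r, c) (N.image (insertCol c))

lemma notMem_image_insertCol (N : Finset (ℕ × ℕ)) : (r, c) ∉ N.image (insertCol c) := by
  simp only [mem_image, not_exists, not_and]
  exact fun p _ hp => snd_insertCol_ne (c := c) p (congrArg Prod.snd hp)

lemma card_insertColWithOne (N : Finset (ℕ × ℕ)) : #(insertColWithOne r c N) = #N + 1 := by
  rw [insertColWithOne, card_insert_of_notMem (notMem_image_insertCol N),
    card_image_of_injective _ insertCol_injective]

lemma insertColWithOne_injective : Function.Injective (insertColWithOne r c) := by
  intro N N' h
  have h' := congrArg (·.erase (r, c)) h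
  simp only [insertColWithOne, erase_insert (notMem_image_insertCol _)] at h'
  exact image_injective insertCol_injective h'

lemma card_row_insertColWithOne (N : Finset (ℕ × ℕ)) (i : ℕ) :
    #{p ∈ insertColWithOne r c N | p.1 = i} = #{p ∈ N | p.1 = i} + if i = r then 1 else 0 := by
  rw [insertColWithOne, filter_insert, filter_image]
  split_ifs with hr hi hi
  · rw [card_insert_of_notMem (notMem_image_insertCol _),
      card_image_of_injective _ insertCol_injective]
    rfl
  · exact absurd hr.symm hi
  · exact absurd hi.symm hr
  · exact card_image_of_injective _ insertCol_injective

lemma insertColWithOne_subset_boxes_iff {m : ℕ} {a : ℕ → ℕ} (hr : r ∈ Icc 1 m) (hc : 1 ≤ c)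
    (hca : ∀ i ∈ Icc 1 m, c ≤ a i) {N : Finset (ℕ × ℕ)} :
    insertColWithOne r c N ⊆ boxes m a ↔ N ⊆ boxes m (fun i => a i - 1) := by
  have hcorner : (r, c) ∈ boxes m a := by
    have := hca 1 (mem_Icc.mpr ⟨le_rfl, (mem_Icc.mp hr).1.trans (mem_Icc.mp hr).2⟩)
    simp only [boxes, mem_filter, mem_product]
    exact ⟨⟨hr, mem_Icc.mpr ⟨hc, this⟩⟩, hca r hr⟩
  simp only [insertColWithOne, insert_subset_iff, hcorner, true_and, image_subset_iff,
    insertCol_mem_boxes_iff hc hca]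
  rfl

lemma isFilling_insertColWithOne_iff {m : ℕ} {ε : ℕ → ℕ} (hεr : ε r ≤ 1)
    {N : Finset (ℕ × ℕ)} :
    IsFilling m ε (insertColWithOne r c N) ↔
      IsFilling m (fun i => if i = r then 1 - ε r else ε i) N := by
  have hcol : Set.InjOn Prod.snd (insertColWithOne r c N : Set (ℕ × ℕ)) ↔
      Set.InjOn Prod.snd (N : Set (ℕ × ℕ)) := by
    rw [insertColWithOne, coe_insert, Set.injOn_insert (notMem_image_insertCol N),
      injOn_snd_image_insertCol, and_iff_left]
    rintro ⟨p, hp, hpc⟩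
    obtain ⟨q, -, rfl⟩ := mem_image.mp (mem_coe.mp hp)
    exact snd_insertCol_ne q hpc
  refine and_congr hcol (forall₂_congr fun i _ => ?_)
  rw [card_row_insertColWithOne]
  dsimp only
  split_ifs with hi
  · subst hi
    omega
  · rfl

lemma eq_insertColWithOne_of_mem {M : Finset (ℕ × ℕ)} (hM : Set.InjOn Prod.snd (M : Set (ℕ × ℕ)))
    (hrc : (r, c) ∈ M) : insertColWithOne r c ((M.erase (r, c)).image (deleteCol c)) = M := by
  have hsnd : ∀ p ∈ M.erase (r, c), p.2 ≠ c := fun p hp hpc =>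
    (ne_of_mem_erase hp) (hM (mem_of_mem_erase hp) hrc hpc)
  rw [insertColWithOne, image_image, image_congr (g := id), image_id, insert_erase hrc]
  exact fun p hp => insertCol_deleteCol (hsnd p hp)

end InsertColWithOne

lemma filter_notMem_filter_powerset {α : Type*} [DecidableEq α] (s : Finset α) (x : α)
    (P : Finset α → Prop) [DecidablePred P] :
    {M ∈ {M ∈ s.powerset | P M} | x ∉ M} = {M ∈ (s.erase x).powerset | P M} := by
  ext M
  simp only [mem_filter, mem_powerset, subset_erase]
  tauto

section Corner

variable {m r c : ℕ} {a ε : ℕ → ℕ}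

lemma card_filter_isFilling_mem_zero :
    #{M ∈ {M ∈ (boxes m a).powerset | IsFilling m ε M ∧ #M = 0} | (r, c) ∈ M} = 0 := by
  rw [card_eq_zero, filter_eq_empty_iff]
  intro M hM hrc
  rw [(card_eq_zero.mp (mem_filter.mp hM).2.2)] at hrc
  exact notMem_empty _ hrc

lemma card_filter_isFilling_mem_succ (hr : r ∈ Icc 1 m) (hc : 1 ≤ c) (hca : ∀ i ∈ Icc 1 m, c ≤ a i)
    (hεr : ε r ≤ 1) (k : ℕ) :
    #{M ∈ {M ∈ (boxes m a).powerset | IsFilling m ε M ∧ #M = k + 1} | (r, c) ∈ M} =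
      #{N ∈ (boxes m (fun i => a i - 1)).powerset |
        IsFilling m (fun i => if i = r then 1 - ε r else ε i) N ∧ #N = k} := by
  have hmem : ∀ N, insertColWithOne r c N ∈
      {M ∈ {M ∈ (boxes m a).powerset | IsFilling m ε M ∧ #M = k + 1} | (r, c) ∈ M} ↔
      N ∈ {N ∈ (boxes m (fun i => a i - 1)).powerset |
        IsFilling m (fun i => if i = r then 1 - ε r else ε i) N ∧ #N = k} := by
    intro N
    simp only [mem_filter, mem_powerset, insertColWithOne_subset_boxes_iff hr hc hca,
      isFilling_insertColWithOne_iff hεr, card_insertColWithOne, Nat.add_right_cancel_iff]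
    simp only [insertColWithOne, mem_insert_self, and_true]
  symm
  refine card_nbij (insertColWithOne r c) (fun N hN => (hmem N).mpr hN)
    insertColWithOne_injective.injOn fun M hM => ?_
  have hM' := mem_filter.mp (mem_coe.mp hM)
  have hN := eq_insertColWithOne_of_mem (mem_filter.mp hM'.1).2.1.1 hM'.2
  refine ⟨_, mem_coe.mpr ((hmem _).mp ?_), hN⟩
  rwa [hN]

end Corner

/-- **Case 2 of the proof of Theorem 1.** If `a m ≥ 2`, then
`g(a, ε, k) = g(a¹, ε, k) + g(a², ε², k - 1)`, where `a¹ = (a 1, …, a (m-1), a m - 1)`,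
`a² = (a 1 - 1, …, a m - 1)`, `ε² = (ε 1, …, ε (m-1), 1 - ε m)`, and the second summand
is interpreted as `0` when `k = 0`. -/
theorem g_recurrence (m : ℕ) (hm : 1 ≤ m) (a ε : ℕ → ℕ)
    (ha : ∀ i, 1 ≤ i → i + 1 ≤ m → a (i + 1) < a i) (ham : 2 ≤ a m)
    (hε : ∀ i ∈ Finset.Icc 1 m, ε i = 0 ∨ ε i = 1) (k : ℕ) :
    gYD m a ε k =
      gYD m (fun i => if i = m then a m - 1 else a i) ε k +
        if k = 0 then 0
        else gYD m (fun i => a i - 1) (fun i => if i = m then 1 - ε m else ε i) (k - 1) := by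
  have hmm : m ∈ Icc 1 m := mem_Icc.mpr ⟨hm, le_rfl⟩
  have hanti : StrictAntiOn a (Set.Icc 1 m) :=
    strictAntiOn_of_succ_lt Set.ordConnected_Icc fun i _ hi hi' => by
      simpa using ha i hi.1 (by simpa using hi'.2)
  have hca : ∀ i ∈ Icc 1 m, a m ≤ a i := fun i hi =>
    hanti.antitoneOn (by simpa using hi) (by simpa using hmm) (mem_Icc.mp hi).2
  have hεm : ε m ≤ 1 := by rcases hε m hmm with h | h <;> omega
  rw [gYD_eq_card_isFilling, gYD_eq_card_isFilling, boxes_shortenLastRow,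
    ← filter_notMem_filter_powerset, add_comm,
    ← card_filter_add_card_filter_not (p := fun M => (m, a m) ∈ M)]
  congr 1
  rcases k with _ | k
  · exact card_filter_isFilling_mem_zero
  · rw [if_neg k.succ_ne_zero, Nat.add_sub_cancel, gYD_eq_card_isFilling]
    exact card_filter_isFilling_mem_succ hmm (by omega) hca hεm k

end ChordExpansion
end

section
/- For n ≥ 1, the number of even increasing trees of order n+2 equals the number of 0-1 Young diagrams M of shape (n, n−1, …, 1) such that every column of M contains at most one 1 and every row of M contains an even number of 1's. An explicit bijection φ sends a tree T (with vertex set {0,1,…,n+1}) to the 0-1 Young diagram φ(T) whose box (i, n+2−j) has value 1 if and only if (i,j) is an edge of T with 1 ≤ i < j ≤ n+1, all other boxes having value 0. -/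
namespace ChordExpansion

/-- `T` (a set of edges `(parent, child)`) is an even increasing tree of order `n + 2`:
a rooted directed tree on `{0, 1, …, n+1}` whose labels increase along edges (so along
all paths from the root `0`), every vertex `j ∈ {1, …, n+1}` having exactly one incoming
edge, and every vertex `k ≠ 0` having even outdegree. -/
def IsEvenIncTree (n : ℕ) (T : Finset (ℕ × ℕ)) : Prop :=
  (∀ e ∈ T, e.1 < e.2 ∧ e.2 ≤ n + 1) ∧
  (∀ j ∈ Finset.Icc 1 (n + 1), (T.filter fun e => e.2 = j).card = 1) ∧
  (∀ k ∈ Finset.Icc 1 (n + 1), (T.filter fun e => e.1 = k).card % 2 = 0)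

instance (n : ℕ) : DecidablePred (IsEvenIncTree n) := fun T => by
  unfold IsEvenIncTree; infer_instance

/-- The even increasing trees of order `n + 2`, encoded by their edge sets. -/
def evenIncTrees (n : ℕ) : Finset (Finset (ℕ × ℕ)) :=
  (Finset.Icc 0 (n + 1) ×ˢ Finset.Icc 1 (n + 1)).powerset.filter (IsEvenIncTree n)

/-- `M` (a set of boxes) is a 0-1 Young diagram of staircase shape `(n, n-1, …, 1)`
(encoded by its set of `1`-boxes) in which every column has at most one `1` and every row
has an even number of `1`'s. -/
def IsGoodStaircaseYD (n : ℕ) (M : Finset (ℕ × ℕ)) : Prop :=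
  M ⊆ boxes n (fun i => n + 1 - i) ∧
  (∀ j ∈ Finset.Icc 1 n, (M.filter fun p => p.2 = j).card ≤ 1) ∧
  (∀ i ∈ Finset.Icc 1 n, (M.filter fun p => p.1 = i).card % 2 = 0)

instance (n : ℕ) : DecidablePred (IsGoodStaircaseYD n) := fun M => by
  unfold IsGoodStaircaseYD; infer_instance

/-- The 0-1 Young diagrams of staircase shape `(n, n-1, …, 1)` in which every column has
at most one `1` and every row has an even number of `1`'s. -/
def staircaseYDs (n : ℕ) : Finset (Finset (ℕ × ℕ)) :=
  (boxes n (fun i => n + 1 - i)).powerset.filter (IsGoodStaircaseYD n)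

/-- The map `φ`: the box `(i, n + 2 - j)` of `φ T` has value `1` iff `(i, j)` is an edge
of `T` with `1 ≤ i < j ≤ n + 1` (edges out of the root `0` are discarded). -/
def phi (n : ℕ) (T : Finset (ℕ × ℕ)) : Finset (ℕ × ℕ) :=
  (T.filter fun e => 1 ≤ e.1).image fun e => (e.1, n + 2 - e.2)

/-! The box `(i, n + 2 - j)` of `φ T` records the edge `(i, j)` of `T`, so row `i` of `φ T`
lists the children of `i` and column `n + 2 - j` holds the parent of `j` unless that parent
is the root. Evenness of rows is evenness of outdegrees, and a column has at most one `1`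
because a vertex has one parent. Conversely a diagram with at most one `1` per column
defines a parent function (parent `0` for an empty column), and a tree is determined by its
non-root edges, since these decide which vertices hang from the root. -/

def colFlip (n : ℕ) (p : ℕ × ℕ) : ℕ × ℕ := (p.1, n + 2 - p.2)

section

variable {n : ℕ}

lemma colFlip_colFlip {p : ℕ × ℕ} (hp : p.2 ≤ n + 2) : colFlip n (colFlip n p) = p := by
  ext
  · rfl
  · simp only [colFlip]; omega

lemma injOn_colFlip : Set.InjOn (colFlip n) {p | p.2 ≤ n + 2} := fun p hp q hq h => by
  rw [← colFlip_colFlip hp, h, colFlip_colFlip hq]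

lemma mem_boxes_staircase {p : ℕ × ℕ} :
    p ∈ boxes n (fun i => n + 1 - i) ↔ 1 ≤ p.1 ∧ 1 ≤ p.2 ∧ p.1 + p.2 ≤ n + 1 := by
  simp only [boxes, Finset.mem_filter, Finset.mem_product, Finset.mem_Icc]
  omega

lemma phi_eq_image (T : Finset (ℕ × ℕ)) :
    phi n T = (T.filter fun e => 1 ≤ e.1).image (colFlip n) := rfl

section phi

variable {T : Finset (ℕ × ℕ)}

lemma mem_phi_iff (hT : ∀ e ∈ T, e.2 ≤ n + 2) {p : ℕ × ℕ} :
    p ∈ phi n T ↔ p.2 ≤ n + 2 ∧ 1 ≤ p.1 ∧ colFlip n p ∈ T := by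
  rw [phi_eq_image, Finset.mem_image]
  constructor
  · rintro ⟨e, he, rfl⟩
    rw [Finset.mem_filter] at he
    rw [colFlip_colFlip (hT e he.1)]
    exact ⟨by simp only [colFlip]; omega, he.2, he.1⟩
  · rintro ⟨hp, hp1, hpT⟩
    exact ⟨colFlip n p, Finset.mem_filter.2 ⟨hpT, hp1⟩, colFlip_colFlip hp⟩

lemma colFlip_mem_phi_iff (hT : ∀ e ∈ T, e.2 ≤ n + 2) {e : ℕ × ℕ} (he : 1 ≤ e.1)
    (he2 : e.2 ≤ n + 2) : colFlip n e ∈ phi n T ↔ e ∈ T := by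
  rw [mem_phi_iff hT, colFlip_colFlip he2]
  exact ⟨fun h => h.2.2, fun h => ⟨by simp only [colFlip]; omega, he, h⟩⟩

lemma card_phi_filter_fst (hT : ∀ e ∈ T, e.2 ≤ n + 2) {k : ℕ} (hk : 1 ≤ k) :
    ((phi n T).filter fun p => p.1 = k).card = (T.filter fun e => e.1 = k).card := by
  have hrow : ((T.filter fun e => 1 ≤ e.1).filter fun e => (colFlip n e).1 = k) =
      T.filter fun e => e.1 = k := by
    rw [Finset.filter_filter]
    exact Finset.filter_congr fun e _ => ⟨fun h => h.2, fun h => ⟨h ▸ hk, h⟩⟩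
  rw [phi_eq_image, Finset.filter_image, hrow]
  exact Finset.card_image_of_injOn fun p hp q hq =>
    injOn_colFlip (hT p (Finset.mem_filter.1 hp).1) (hT q (Finset.mem_filter.1 hq).1)

lemma card_phi_filter_snd_le (hT : ∀ e ∈ T, e.2 ≤ n + 2) (c : ℕ) :
    ((phi n T).filter fun p => p.2 = c).card ≤ (T.filter fun e => e.2 = n + 2 - c).card := by
  rw [phi_eq_image, Finset.filter_image]
  refine Finset.card_image_le.trans (Finset.card_le_card fun e he => ?_)
  obtain ⟨he, hc⟩ := Finset.mem_filter.1 he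
  have heT := (Finset.mem_filter.1 he).1
  have := hT e heT
  simp only [colFlip] at hc
  exact Finset.mem_filter.2 ⟨heT, by omega⟩

end phi

namespace IsEvenIncTree

variable {T T' : Finset (ℕ × ℕ)}

lemma snd_le (hT : IsEvenIncTree n T) {e : ℕ × ℕ} (he : e ∈ T) : e.2 ≤ n + 1 :=
  (hT.1 e he).2

lemma snd_le_add_two (hT : IsEvenIncTree n T) : ∀ e ∈ T, e.2 ≤ n + 2 :=
  fun _ he => Nat.le_succ_of_le (hT.snd_le he)

lemma eq_of_mem_filter_snd (hT : IsEvenIncTree n T) {e f : ℕ × ℕ} (he : e ∈ T) (hf : f ∈ T)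
    (hef : e.2 = f.2) : e = f := by
  have hcard := hT.2.1 e.2 (Finset.mem_Icc.2 ⟨by have := hT.1 e he; omega, hT.snd_le he⟩)
  exact Finset.card_le_one.1 hcard.le e (Finset.mem_filter.2 ⟨he, rfl⟩) f
    (Finset.mem_filter.2 ⟨hf, hef.symm⟩)

lemma subset_of_forall_pos (hT : IsEvenIncTree n T) (hT' : IsEvenIncTree n T')
    (h : ∀ e, 1 ≤ e.1 → (e ∈ T ↔ e ∈ T')) : T ⊆ T' := by
  intro e he
  by_cases he1 : 1 ≤ e.1
  · exact (h e he1).1 he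
  obtain ⟨f, hf⟩ := Finset.card_eq_one.1
    (hT'.2.1 e.2 (Finset.mem_Icc.2 ⟨by have := hT.1 e he; omega, hT.snd_le he⟩))
  have hfmem : f ∈ T'.filter fun x => x.2 = e.2 := hf ▸ Finset.mem_singleton_self f
  obtain ⟨hfT', hfe⟩ := Finset.mem_filter.1 hfmem
  by_cases hf1 : 1 ≤ f.1
  · have hef := congrArg Prod.fst (hT.eq_of_mem_filter_snd he ((h f hf1).2 hfT') hfe.symm)
    omega
  · rwa [show e = f by ext <;> omega]

lemma ext_of_forall_pos (hT : IsEvenIncTree n T) (hT' : IsEvenIncTree n T')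
    (h : ∀ e, 1 ≤ e.1 → (e ∈ T ↔ e ∈ T')) : T = T' :=
  (hT.subset_of_forall_pos hT' h).antisymm
    (hT'.subset_of_forall_pos hT fun e he => (h e he).symm)

end IsEvenIncTree

lemma isGoodStaircaseYD_phi {T : Finset (ℕ × ℕ)} (hT : IsEvenIncTree n T) :
    IsGoodStaircaseYD n (phi n T) := by
  have hT2 := hT.snd_le_add_two
  refine ⟨fun p hp => ?_, fun j hj => ?_, fun k hk => ?_⟩
  · obtain ⟨hp2, hp1, hpT⟩ := (mem_phi_iff hT2).1 hp
    have := hT.1 _ hpT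
    simp only [colFlip] at this
    exact mem_boxes_staircase.2 ⟨hp1, by omega, by omega⟩
  · rw [Finset.mem_Icc] at hj
    have hparent := hT.2.1 (n + 2 - j) (Finset.mem_Icc.2 ⟨by omega, by omega⟩)
    exact (card_phi_filter_snd_le hT2 j).trans hparent.le
  · rw [Finset.mem_Icc] at hk
    rw [card_phi_filter_fst hT2 hk.1]
    exact hT.2.2 k (Finset.mem_Icc.2 ⟨hk.1, by omega⟩)

lemma injOn_phi : Set.InjOn (phi n) {T | IsEvenIncTree n T} := fun T hT T' hT' h =>
  IsEvenIncTree.ext_of_forall_pos hT hT' fun e he1 => by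
    by_cases he2 : e.2 ≤ n + 2
    · rw [← colFlip_mem_phi_iff hT.snd_le_add_two he1 he2, h,
        colFlip_mem_phi_iff hT'.snd_le_add_two he1 he2]
    · exact iff_of_false (fun he => he2 (hT.snd_le_add_two e he))
        (fun he => he2 (hT'.snd_le_add_two e he))

/-- The row of the `1` in column `c` of `M`; the supremum makes it `0` for an empty column. -/
def colRow (M : Finset (ℕ × ℕ)) (c : ℕ) : ℕ := (M.filter fun p => p.2 = c).sup Prod.fst

lemma colRow_eq_iff {M : Finset (ℕ × ℕ)} {c i : ℕ}
    (hcol : (M.filter fun p => p.2 = c).card ≤ 1) (hi : 1 ≤ i) :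
    colRow M c = i ↔ (i, c) ∈ M := by
  rcases (M.filter fun p => p.2 = c).eq_empty_or_nonempty with hempty | hne
  · have hic : (i, c) ∉ M := fun h => by
      simpa using Finset.filter_eq_empty_iff.1 hempty h
    simp only [colRow, hempty, Finset.sup_empty, Nat.bot_eq_zero, hic, iff_false]
    omega
  · obtain ⟨p, hp⟩ := Finset.card_eq_one.1 (le_antisymm hcol hne.card_pos)
    have hpc : p.2 = c := by
      have hpmem : p ∈ M.filter fun p => p.2 = c := by rw [hp]; exact Finset.mem_singleton_self p
      exact (Finset.mem_filter.1 hpmem).2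
    have hmem : (i, c) ∈ M ↔ (i, c) ∈ M.filter fun p => p.2 = c := by simp
    rw [colRow, hp, Finset.sup_singleton, hmem, hp, Finset.mem_singleton, Prod.ext_iff, hpc]
    simp [eq_comm]

def phiInv (n : ℕ) (M : Finset (ℕ × ℕ)) : Finset (ℕ × ℕ) :=
  (Finset.Icc 1 (n + 1)).image fun j => (colRow M (n + 2 - j), j)

lemma mem_phiInv {M : Finset (ℕ × ℕ)} {e : ℕ × ℕ} :
    e ∈ phiInv n M ↔ e.2 ∈ Finset.Icc 1 (n + 1) ∧ colRow M (n + 2 - e.2) = e.1 := by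
  simp only [phiInv, Finset.mem_image, Prod.ext_iff]
  constructor
  · rintro ⟨j, hj, h1, rfl⟩
    exact ⟨hj, h1⟩
  · rintro ⟨hj, h1⟩
    exact ⟨e.2, hj, h1, rfl⟩

lemma snd_le_of_mem_phiInv {M : Finset (ℕ × ℕ)} : ∀ e ∈ phiInv n M, e.2 ≤ n + 2 := by
  intro e he
  have := Finset.mem_Icc.1 (mem_phiInv.1 he).1
  omega

namespace IsGoodStaircaseYD

variable {M : Finset (ℕ × ℕ)}

lemma card_filter_snd_le_one (hM : IsGoodStaircaseYD n M) (c : ℕ) :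
    (M.filter fun p => p.2 = c).card ≤ 1 := by
  by_cases hc : c ∈ Finset.Icc 1 n
  · exact hM.2.1 c hc
  · suffices hempty : (M.filter fun p => p.2 = c) = ∅ by simp [hempty]
    refine Finset.filter_eq_empty_iff.2 fun p hp hpc => hc ?_
    have := mem_boxes_staircase.1 (hM.1 hp)
    exact Finset.mem_Icc.2 ⟨by omega, by omega⟩

lemma card_filter_fst_even (hM : IsGoodStaircaseYD n M) (k : ℕ) :
    (M.filter fun p => p.1 = k).card % 2 = 0 := by
  by_cases hk : k ∈ Finset.Icc 1 n
  · exact hM.2.2 k hk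
  · suffices hempty : (M.filter fun p => p.1 = k) = ∅ by simp [hempty]
    refine Finset.filter_eq_empty_iff.2 fun p hp hpk => hk ?_
    have := mem_boxes_staircase.1 (hM.1 hp)
    exact Finset.mem_Icc.2 ⟨by omega, by omega⟩

lemma colRow_lt (hM : IsGoodStaircaseYD n M) {j : ℕ} (hj : 1 ≤ j) :
    colRow M (n + 2 - j) < j := by
  by_cases h0 : colRow M (n + 2 - j) = 0
  · omega
  have hmem := (colRow_eq_iff (hM.card_filter_snd_le_one _) (Nat.one_le_iff_ne_zero.2 h0)).1 rfl
  have := mem_boxes_staircase.1 (hM.1 hmem)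
  simp only at this
  omega

lemma phi_phiInv (hM : IsGoodStaircaseYD n M) : phi n (phiInv n M) = M := by
  ext p
  rw [mem_phi_iff snd_le_of_mem_phiInv, mem_phiInv]
  simp only [colFlip, Finset.mem_Icc]
  constructor
  · rintro ⟨hp2, hp1, ⟨-, hp2'⟩, hrow⟩
    rw [show n + 2 - (n + 2 - p.2) = p.2 by omega] at hrow
    exact (colRow_eq_iff (hM.card_filter_snd_le_one _) hp1).1 hrow
  · intro hp
    have hbox := mem_boxes_staircase.1 (hM.1 hp)
    rw [show n + 2 - (n + 2 - p.2) = p.2 by omega]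
    exact ⟨by omega, hbox.1, ⟨by omega, by omega⟩,
      (colRow_eq_iff (hM.card_filter_snd_le_one _) hbox.1).2 hp⟩

lemma isEvenIncTree_phiInv (hM : IsGoodStaircaseYD n M) : IsEvenIncTree n (phiInv n M) := by
  refine ⟨fun e he => ?_, fun j hj => ?_, fun k hk => ?_⟩
  · obtain ⟨hj, hrow⟩ := mem_phiInv.1 he
    have hj := Finset.mem_Icc.1 hj
    exact ⟨hrow ▸ hM.colRow_lt hj.1, hj.2⟩
  · rw [Finset.card_eq_one]
    refine ⟨(colRow M (n + 2 - j), j), Finset.ext fun e => ?_⟩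
    rw [Finset.mem_filter, mem_phiInv, Finset.mem_singleton, Prod.ext_iff]
    constructor
    · rintro ⟨⟨-, hrow⟩, rfl⟩
      exact ⟨hrow.symm, rfl⟩
    · rintro ⟨h1, h2⟩
      exact ⟨⟨h2 ▸ hj, h2 ▸ h1.symm⟩, h2⟩
  · rw [← card_phi_filter_fst snd_le_of_mem_phiInv (Finset.mem_Icc.1 hk).1, hM.phi_phiInv]
    exact hM.card_filter_fst_even k

end IsGoodStaircaseYD

lemma mem_evenIncTrees {T : Finset (ℕ × ℕ)} : T ∈ evenIncTrees n ↔ IsEvenIncTree n T := by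
  rw [evenIncTrees, Finset.mem_filter, Finset.mem_powerset, and_iff_right_iff_imp]
  intro hT e he
  have := hT.1 e he
  simp only [Finset.mem_product, Finset.mem_Icc]
  omega

lemma mem_staircaseYDs {M : Finset (ℕ × ℕ)} :
    M ∈ staircaseYDs n ↔ IsGoodStaircaseYD n M := by
  rw [staircaseYDs, Finset.mem_filter, Finset.mem_powerset, and_iff_right_iff_imp]
  exact fun h => h.1

end

theorem evenIncTrees_card_eq_staircaseYDs_card_general (n : ℕ) :
    (evenIncTrees n).card = (staircaseYDs n).card ∧
      Set.BijOn (phi n) ↑(evenIncTrees n) ↑(staircaseYDs n) := by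
  have hbij : Set.BijOn (phi n) ↑(evenIncTrees n) ↑(staircaseYDs n) := by
    refine ⟨fun T hT => ?_, fun T hT T' hT' => ?_, fun M hM => ?_⟩
    · exact mem_staircaseYDs.2 (isGoodStaircaseYD_phi (mem_evenIncTrees.1 hT))
    · exact injOn_phi (mem_evenIncTrees.1 hT) (mem_evenIncTrees.1 hT')
    · have hM := mem_staircaseYDs.1 hM
      exact ⟨phiInv n M, mem_evenIncTrees.2 hM.isEvenIncTree_phiInv, hM.phi_phiInv⟩
  exact ⟨hbij.finsetCard_eq, hbij⟩

/-- **Remark after Corollary 3.** For `n ≥ 1`, the number of even increasing trees of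
order `n + 2` equals the number of 0-1 Young diagrams of staircase shape `(n, n-1, …, 1)`
in which every column has at most one `1` and every row has an even number of `1`'s;
moreover `φ` is an explicit bijection between the two families. -/
theorem evenIncTrees_card_eq_staircaseYDs_card (n : ℕ) (hn : 1 ≤ n) :
    (evenIncTrees n).card = (staircaseYDs n).card ∧
      Set.BijOn (phi n) ↑(evenIncTrees n) ↑(staircaseYDs n) :=
  evenIncTrees_card_eq_staircaseYDs_card_general n

end ChordExpansion
end
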